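/- There exists an absolute constant C such that when algorithm Quadruple-Round is executed on a channel with collision detection against a 1-activating adversary of type (3/8, b), in every round of every admissible execution the total number of packets stored in the queues of the active stations is at most b + C. -/

import Mathlib

/-- Remove one packet from the queue of station `i` (stations of a segment are indexed
`0, 1, 2, 3`; `q i` is the number of packets pending at station `i`). -/
def deqQR (q : ℕ → ℕ) (i : ℕ) : ℕ → ℕ := fun j => if j = i then q j - 1 else q j

/-- The number of active stations of a segment. -/
def activeCountQR (q : ℕ → ℕ) : ℕ :=
  (if q 0 = 0 then 0 else 1) + (if q 1 = 0 then 0 else 1) +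
    (if q 2 = 0 then 0 else 1) + (if q 3 = 0 then 0 else 1)

/-- One iteration of a phase of algorithm Quadruple-Round, for a segment whose stations
currently hold the packet counts `q` (with at least one active station).  It returns the
list of the rounds of the iteration — each entry `some i` meaning that a packet of station
`i` is heard in that round and `none` meaning a void round (collision or silence) — and
the resulting packet counts.  In the first round all active stations of the segment
transmit: if only one station is active its packet is heard and the iteration ends; after
a collision the stations of the left pair (0 and 1) transmit in the second round: if both
are active this is a collision and stations 0 and 1 then transmit singly in the third and
fourth rounds; if exactly one is active its packet is heard, ending the iteration; if the
second round is silent, the right-pair stations 2 and 3 transmit singly in the third and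
fourth rounds. -/
def iterQR (q : ℕ → ℕ) : List (Option ℕ) × (ℕ → ℕ) :=
  if activeCountQR q = 1 then
    let i := if q 0 ≠ 0 then 0 else if q 1 ≠ 0 then 1 else if q 2 ≠ 0 then 2 else 3
    ([some i], deqQR q i)
  else if q 0 ≠ 0 ∧ q 1 ≠ 0 then ([none, none, some 0, some 1], deqQR (deqQR q 0) 1)
  else if q 0 ≠ 0 then ([none, some 0], deqQR q 0)
  else if q 1 ≠ 0 then ([none, some 1], deqQR q 1)
  else ([none, none, some 2, some 3], deqQR (deqQR q 2) 3)

/-- The trace of a phase (fuelled version): iterations repeat until all stations of the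
segment are passive, and a final silent round ends the phase. -/
def phaseTraceAux : ℕ → (ℕ → ℕ) → List (Option ℕ)
  | 0, _ => []
  | fuel + 1, q =>
    if q 0 = 0 ∧ q 1 = 0 ∧ q 2 = 0 ∧ q 3 = 0 then [none]
    else (iterQR q).1 ++ phaseTraceAux fuel (iterQR q).2

/-- The round-by-round trace of the phase processing a segment whose four stations hold
the packet counts `q`. -/
def phaseTrace (q : ℕ → ℕ) : List (Option ℕ) :=
  phaseTraceAux (q 0 + q 1 + q 2 + q 3 + 1) q

/-- The number of rounds taken by the phase processing a segment with packet counts `q`. -/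
def phaseLen (q : ℕ → ℕ) : ℕ := (phaseTrace q).length

/-- Admissibility of a 1-activating injection pattern `a` (in round `t`, a fresh passive
station labelled `t` is activated with `a t` packets, when `a t > 0`) for the leaky-bucket
adversary of type `(ρ, b)`. -/
def Admissible (ρ : ℝ) (b : ℕ) (a : ℕ → ℕ) : Prop :=
  ∀ s n : ℕ, ((∑ t ∈ Finset.Ico s (s + n), a t : ℕ) : ℝ) ≤ ρ * n + b

/-- The packet counts of the four stations of segment `j` (segment `j` consists of the
rounds `4j, …, 4j + 3`; against a 1-activating adversary each station holds exactly the
packets injected at its activation). -/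
def segQ (a : ℕ → ℕ) (j : ℕ) : ℕ → ℕ := fun i => a (4 * j + i)

/-- The first round of the phase processing segment `j`: phases are executed one after the
other, and the phase of a segment starts only after at least four rounds have passed since
the first round of the segment. -/
def phaseStart (a : ℕ → ℕ) : ℕ → ℕ
  | 0 => 4
  | j + 1 => max (phaseStart a j + phaseLen (segQ a j)) (4 * (j + 1) + 4)

/-- The number of packets of station `v` heard (in the phase of its segment `v / 4`)
strictly before round `t`. -/
def heardBefore (a : ℕ → ℕ) (v t : ℕ) : ℕ :=
  ((List.range (phaseTrace (segQ a (v / 4))).length).filter fun off =>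
      decide (phaseStart a (v / 4) + off < t) &&
      decide ((phaseTrace (segQ a (v / 4))).getD off none = some (v % 4))).length

/-- The number of packets pending at station `v` at the beginning of round `t` in the
execution of Quadruple-Round against the 1-activating injection pattern `a`. -/
def pendingQR (a : ℕ → ℕ) (v t : ℕ) : ℕ := a v - heardBefore a v t


/-!
Fix a round `t` and let `j` be the first segment whose phase is not over by round `t`: all
stations of earlier segments are already passive. Going back to the last segment `k` whose
phase started as early as allowed, at round `4k + 4`, the phases of the segments
`k, …, j - 1` ran back to back. A phase over `A` packets lasts at most `2A + 1` rounds, and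
since these phases could not keep pace with the segments (they last at least four rounds per
segment), they last at most `8/3` rounds per packet. Likewise the first `r` rounds of a phase
hear at least `(r - 2) / 2` packets. So from round `4k` on, packets are heard at rate at least
`3/8` up to an additive constant, which is the rate at which the adversary injects them, and
the backlog never exceeds `b + 2`.
-/

def heardCount (l : List (Option ℕ)) : ℕ :=
  l.count (some 0) + l.count (some 1) + l.count (some 2) + l.count (some 3)

theorem heardCount_append (l l' : List (Option ℕ)) :
    heardCount (l ++ l') = heardCount l + heardCount l' := by
  simp only [heardCount, List.count_append]
  omega

def packetCount (q : ℕ → ℕ) : ℕ := q 0 + q 1 + q 2 + q 3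

def iterTraces : List (List (Option ℕ)) :=
  [[some 0], [some 1], [some 2], [some 3], [none, none, some 0, some 1], [none, some 0],
    [none, some 1], [none, none, some 2, some 3]]

theorem iterQR_fst_mem (q : ℕ → ℕ) : (iterQR q).1 ∈ iterTraces := by
  unfold iterQR
  split_ifs <;> simp [iterTraces]

theorem heardCount_pos_of_mem_iterTraces {l : List (Option ℕ)} (hl : l ∈ iterTraces) :
    0 < heardCount l := by
  revert l
  decide

theorem length_le_of_mem_iterTraces {l : List (Option ℕ)} (hl : l ∈ iterTraces) :
    l.length ≤ 2 * heardCount l := by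
  revert l
  decide

theorem le_two_mul_heardCount_take_of_mem_iterTraces {l : List (Option ℕ)}
    (hl : l ∈ iterTraces) {r : ℕ} (hr : r ≤ l.length) :
    r ≤ 2 * heardCount (l.take r) + 2 := by
  revert r l
  decide

theorem count_iterQR_add {q : ℕ → ℕ}
    (hq : ¬(q 0 = 0 ∧ q 1 = 0 ∧ q 2 = 0 ∧ q 3 = 0)) {i : ℕ} (hi : i < 4) :
    (iterQR q).1.count (some i) + (iterQR q).2 i = q i := by
  by_cases h0 : q 0 = 0 <;> by_cases h1 : q 1 = 0 <;> by_cases h2 : q 2 = 0 <;>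
    by_cases h3 : q 3 = 0 <;>
    simp [iterQR, activeCountQR, deqQR, h0, h1, h2, h3] at hq ⊢ <;>
    interval_cases i <;> simp <;> omega

theorem packetCount_iterQR_add {q : ℕ → ℕ}
    (hq : ¬(q 0 = 0 ∧ q 1 = 0 ∧ q 2 = 0 ∧ q 3 = 0)) :
    packetCount (iterQR q).2 + heardCount (iterQR q).1 = packetCount q := by
  have h0 := count_iterQR_add hq (i := 0) (by norm_num)
  have h1 := count_iterQR_add hq (i := 1) (by norm_num)
  have h2 := count_iterQR_add hq (i := 2) (by norm_num)
  have h3 := count_iterQR_add hq (i := 3) (by norm_num)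
  unfold packetCount heardCount
  omega

theorem packetCount_iterQR_lt {q : ℕ → ℕ}
    (hq : ¬(q 0 = 0 ∧ q 1 = 0 ∧ q 2 = 0 ∧ q 3 = 0)) {n : ℕ} (hn : packetCount q < n + 1) :
    packetCount (iterQR q).2 < n := by
  have := packetCount_iterQR_add hq
  have := heardCount_pos_of_mem_iterTraces (iterQR_fst_mem q)
  omega

theorem phaseTraceAux_succ_of_not_idle {q : ℕ → ℕ}
    (hq : ¬(q 0 = 0 ∧ q 1 = 0 ∧ q 2 = 0 ∧ q 3 = 0)) (n : ℕ) :
    phaseTraceAux (n + 1) q = (iterQR q).1 ++ phaseTraceAux n (iterQR q).2 := by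
  rw [phaseTraceAux, if_neg hq]

theorem count_phaseTraceAux {fuel : ℕ} {q : ℕ → ℕ} (hfuel : packetCount q < fuel)
    {i : ℕ} (hi : i < 4) : (phaseTraceAux fuel q).count (some i) = q i := by
  induction fuel generalizing q with
  | zero => omega
  | succ n ih =>
    by_cases hq : q 0 = 0 ∧ q 1 = 0 ∧ q 2 = 0 ∧ q 3 = 0
    · have : q i = 0 := by interval_cases i <;> omega
      simp [phaseTraceAux, hq, this]
    · rw [phaseTraceAux_succ_of_not_idle hq, List.count_append,
        ih (packetCount_iterQR_lt hq hfuel), count_iterQR_add hq hi]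

theorem length_phaseTraceAux_le {fuel : ℕ} {q : ℕ → ℕ} (hfuel : packetCount q < fuel) :
    (phaseTraceAux fuel q).length ≤ 2 * packetCount q + 1 := by
  induction fuel generalizing q with
  | zero => omega
  | succ n ih =>
    by_cases hq : q 0 = 0 ∧ q 1 = 0 ∧ q 2 = 0 ∧ q 3 = 0
    · simp [phaseTraceAux, hq]
    · have := ih (packetCount_iterQR_lt hq hfuel)
      have := packetCount_iterQR_add hq
      have := length_le_of_mem_iterTraces (iterQR_fst_mem q)
      rw [phaseTraceAux_succ_of_not_idle hq, List.length_append]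
      omega

theorem le_two_mul_heardCount_take_phaseTraceAux {fuel : ℕ} {q : ℕ → ℕ}
    (hfuel : packetCount q < fuel) {r : ℕ} (hr : r ≤ (phaseTraceAux fuel q).length) :
    r ≤ 2 * heardCount ((phaseTraceAux fuel q).take r) + 2 := by
  induction fuel generalizing q r with
  | zero => omega
  | succ n ih =>
    by_cases hq : q 0 = 0 ∧ q 1 = 0 ∧ q 2 = 0 ∧ q 3 = 0
    · rw [phaseTraceAux, if_pos hq, List.length_singleton] at hr
      omega
    · rw [phaseTraceAux_succ_of_not_idle hq, List.length_append] at hr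
      rw [phaseTraceAux_succ_of_not_idle hq, List.take_append, heardCount_append]
      rcases le_or_gt r (iterQR q).1.length with hle | hgt
      · have := le_two_mul_heardCount_take_of_mem_iterTraces (iterQR_fst_mem q) hle
        omega
      · have := length_le_of_mem_iterTraces (iterQR_fst_mem q)
        have := ih (packetCount_iterQR_lt hq hfuel) (r := r - (iterQR q).1.length) (by omega)
        rw [List.take_of_length_le hgt.le]
        omega

theorem count_phaseTrace (q : ℕ → ℕ) {i : ℕ} (hi : i < 4) :
    (phaseTrace q).count (some i) = q i :=
  count_phaseTraceAux (Nat.lt_succ_self _) hi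

theorem phaseLen_le (q : ℕ → ℕ) : phaseLen q ≤ 2 * packetCount q + 1 :=
  length_phaseTraceAux_le (Nat.lt_succ_self _)

theorem le_two_mul_heardCount_take_phaseTrace (q : ℕ → ℕ) {r : ℕ} (hr : r ≤ phaseLen q) :
    r ≤ 2 * heardCount ((phaseTrace q).take r) + 2 :=
  le_two_mul_heardCount_take_phaseTraceAux (Nat.lt_succ_self _) hr

theorem length_filter_range_getD_eq_count_take {α : Type*} [BEq α] [LawfulBEq α]
    [DecidableEq α] (l : List α) (d x : α) (k : ℕ) :
    ((List.range l.length).filter fun i => decide (i < k) && decide (l.getD i d = x)).length =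
      (l.take k).count x := by
  induction l generalizing k with
  | nil => simp
  | cons y l ih =>
    cases k with
    | zero => simp
    | succ k =>
      rw [List.length_cons, List.range_succ_eq_map, List.filter_cons, List.filter_map]
      by_cases hy : y = x <;> simp [Function.comp_def, ← ih k, hy]

theorem heardBefore_eq (a : ℕ → ℕ) (v t : ℕ) :
    heardBefore a v t =
      ((phaseTrace (segQ a (v / 4))).take (t - phaseStart a (v / 4))).count (some (v % 4)) := by
  rw [heardBefore, ← length_filter_range_getD_eq_count_take _ none]
  congr 2
  funext off
  congr 1
  exact decide_eq_decide.mpr (by omega)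

theorem le_phaseStart (a : ℕ → ℕ) : ∀ j, 4 * j + 4 ≤ phaseStart a j
  | 0 => le_rfl
  | _ + 1 => le_max_right _ _

theorem exists_phaseStart_eq_sum (a : ℕ → ℕ) (j : ℕ) :
    ∃ k ≤ j, phaseStart a j = 4 * k + 4 + ∑ i ∈ Finset.Ico k j, phaseLen (segQ a i) := by
  induction j with
  | zero => exact ⟨0, le_rfl, by simp [phaseStart]⟩
  | succ j ih =>
    obtain ⟨k, hkj, hk⟩ := ih
    rcases max_cases (phaseStart a j + phaseLen (segQ a j)) (4 * (j + 1) + 4) with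
      ⟨hmax, -⟩ | ⟨hmax, -⟩
    · refine ⟨k, by omega, ?_⟩
      rw [phaseStart, hmax, hk, Finset.sum_Ico_succ_top hkj]
      omega
    · exact ⟨j + 1, le_rfl, by simp [phaseStart, hmax]⟩

theorem sum_Ico_add_four {M : Type*} [AddCommMonoid M] (f : ℕ → M) (m : ℕ) :
    ∑ v ∈ Finset.Ico m (m + 4), f v = f m + f (m + 1) + f (m + 2) + f (m + 3) := by
  simp [Finset.sum_Ico_eq_sum_range, Finset.sum_range_succ]

theorem sum_packetCount_segQ (a : ℕ → ℕ) {k j : ℕ} (hkj : k ≤ j) :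
    ∑ i ∈ Finset.Ico k j, packetCount (segQ a i) =
      ∑ v ∈ Finset.Ico (4 * k) (4 * j), a v := by
  induction j, hkj using Nat.le_induction with
  | base => simp
  | succ j hkj ih =>
    rw [Finset.sum_Ico_succ_top hkj, ih, show 4 * (j + 1) = 4 * j + 4 by ring,
      ← Finset.sum_Ico_consecutive a (by omega : 4 * k ≤ 4 * j)
        (by omega : 4 * j ≤ 4 * j + 4),
      sum_Ico_add_four]
    rfl

theorem exists_three_mul_phaseStart_le (a : ℕ → ℕ) (j : ℕ) :
    ∃ k ≤ j,
      3 * phaseStart a j ≤ 12 * k + 12 + 8 * ∑ v ∈ Finset.Ico (4 * k) (4 * j), a v := by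
  obtain ⟨k, hkj, hstart⟩ := exists_phaseStart_eq_sum a j
  have hlen : ∑ i ∈ Finset.Ico k j, phaseLen (segQ a i) ≤
      2 * ∑ v ∈ Finset.Ico (4 * k) (4 * j), a v + (j - k) :=
    calc ∑ i ∈ Finset.Ico k j, phaseLen (segQ a i)
        ≤ ∑ i ∈ Finset.Ico k j, (2 * packetCount (segQ a i) + 1) :=
          Finset.sum_le_sum fun i _ => phaseLen_le _
      _ = 2 * ∑ v ∈ Finset.Ico (4 * k) (4 * j), a v + (j - k) := by
          rw [Finset.sum_add_distrib, ← Finset.mul_sum, sum_packetCount_segQ a hkj,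
            Finset.sum_const, Nat.card_Ico, smul_eq_mul, mul_one]
  -- The phases of segments `k, …, j - 1` last `L ≤ 2S + (j - k)` rounds in total, and
  -- `L ≥ 4 (j - k)` since the phase of `j` starts no earlier than round `4j + 4`; so `3L ≤ 8S`.
  have := le_phaseStart a j
  exact ⟨k, hkj, by omega⟩

theorem Admissible.eight_mul_sum_Ico_le {b : ℕ} {a : ℕ → ℕ} (h : Admissible (3 / 8) b a)
    {s e : ℕ} (hse : s ≤ e) : 8 * ∑ v ∈ Finset.Ico s e, a v ≤ 3 * (e - s) + 8 * b := by
  have h' := h s (e - s)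
  rw [Nat.add_sub_cancel' hse] at h'
  have : (8 : ℝ) * (∑ v ∈ Finset.Ico s e, a v : ℕ) ≤ 3 * (e - s : ℕ) + 8 * b := by
    linarith
  exact_mod_cast this

theorem pendingQR_eq_zero_of_phaseLen_le {a : ℕ → ℕ} {v t : ℕ}
    (h : phaseStart a (v / 4) + phaseLen (segQ a (v / 4)) ≤ t) : pendingQR a v t = 0 := by
  rw [pendingQR, heardBefore_eq, List.take_of_length_le (by unfold phaseLen at h; omega),
    count_phaseTrace _ (Nat.mod_lt v (by norm_num)), segQ, Nat.div_add_mod, Nat.sub_self]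

theorem pendingQR_add_count_take (a : ℕ → ℕ) (j t : ℕ) {i : ℕ} (hi : i < 4) :
    pendingQR a (4 * j + i) t +
      ((phaseTrace (segQ a j)).take (t - phaseStart a j)).count (some i) = a (4 * j + i) := by
  have hle := ((List.take_sublist (t - phaseStart a j) (phaseTrace (segQ a j))).count_le
    (some i)).trans (count_phaseTrace (segQ a j) hi).le
  rw [pendingQR, heardBefore_eq, show (4 * j + i) / 4 = j by omega,
    show (4 * j + i) % 4 = i by omega]
  exact Nat.sub_add_cancel hle

theorem sum_pendingQR_add_heardCount_le (a : ℕ → ℕ) (j t : ℕ) :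
    ∑ v ∈ Finset.Ico (4 * j) t, pendingQR a v t +
      heardCount ((phaseTrace (segQ a j)).take (t - phaseStart a j)) ≤
      ∑ v ∈ Finset.Ico (4 * j) t, a v := by
  have hrest : ∀ s, ∑ v ∈ Finset.Ico s t, pendingQR a v t ≤ ∑ v ∈ Finset.Ico s t, a v :=
    fun s => Finset.sum_le_sum fun v _ => Nat.sub_le _ _
  rcases lt_or_ge t (4 * j + 4) with ht | ht
  · have := le_phaseStart a j
    rw [show t - phaseStart a j = 0 by omega, List.take_zero]
    simpa [heardCount] using hrest (4 * j)
  · have := hrest (4 * j + 4)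
    have h0 := pendingQR_add_count_take a j t (i := 0) (by norm_num)
    have h1 := pendingQR_add_count_take a j t (i := 1) (by norm_num)
    have h2 := pendingQR_add_count_take a j t (i := 2) (by norm_num)
    have h3 := pendingQR_add_count_take a j t (i := 3) (by norm_num)
    rw [← Finset.sum_Ico_consecutive _ (by omega : 4 * j ≤ 4 * j + 4) ht,
      ← Finset.sum_Ico_consecutive a (by omega : 4 * j ≤ 4 * j + 4) ht, sum_Ico_add_four,
      sum_Ico_add_four, heardCount]
    rw [add_zero] at h0
    omega

theorem exists_first_unfinished_phase (a : ℕ → ℕ) (t : ℕ) :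
    ∃ j, 4 * j ≤ t ∧ t < phaseStart a j + phaseLen (segQ a j) ∧
      ∀ v < 4 * j, pendingQR a v t = 0 := by
  have hex : ∃ j, t < phaseStart a j + phaseLen (segQ a j) :=
    ⟨t, by have := le_phaseStart a t; omega⟩
  refine ⟨Nat.find hex, ?_, Nat.find_spec hex, fun v hv =>
    pendingQR_eq_zero_of_phaseLen_le (not_lt.mp (Nat.find_min hex (by omega)))⟩
  rcases Nat.eq_zero_or_eq_succ_pred (Nat.find hex) with h | h
  · omega
  · have := not_lt.mp (Nat.find_min hex (show (Nat.find hex).pred < Nat.find hex by omega))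
    have := le_phaseStart a (Nat.find hex).pred
    omega

/-- there is an absolute constant `C` such that when Quadruple-Round is
executed on a channel with collision detection against a 1-activating adversary of type
`(3/8, b)`, in every round of every admissible execution the total number of packets
stored in the queues of the active stations is at most `b + C`. -/
theorem quadruple_round_queue_bound :
    ∃ C : ℕ, ∀ b : ℕ, 0 < b → ∀ a : ℕ → ℕ, Admissible (3/8) b a → ∀ t : ℕ,
      (∑ v ∈ Finset.range t, pendingQR a v t) ≤ b + C := by
  refine ⟨2, fun b _ a hadm t => ?_⟩
  obtain ⟨j, hjt, htj, hdone⟩ := exists_first_unfinished_phase a t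
  obtain ⟨k, hkj, hstart⟩ := exists_three_mul_phaseStart_le a j
  have hsum : ∑ v ∈ Finset.Ico (4 * j) t, pendingQR a v t =
      ∑ v ∈ Finset.range t, pendingQR a v t := by
    refine Finset.sum_subset (fun v hv => ?_) fun v hv hv' => hdone v ?_
    · exact Finset.mem_range.mpr (Finset.mem_Ico.mp hv).2
    · rw [Finset.mem_range] at hv
      rw [Finset.mem_Ico] at hv'
      omega
  have hpending := sum_pendingQR_add_heardCount_le a j t
  have hheard := le_two_mul_heardCount_take_phaseTrace (segQ a j)
    (r := t - phaseStart a j) (by omega)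
  have hinjected := hadm.eight_mul_sum_Ico_le (s := 4 * k) (e := t) (by omega)
  rw [← Finset.sum_Ico_consecutive _ (by omega : 4 * k ≤ 4 * j) hjt] at hinjected
  omega
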